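/- arXiv:1910.01153 — 2 statements merged into one kernel-verified Lean document; each statement's English description precedes it below -/
import Mathlib

section
/- Let d ≥ 1, let Φ : (0,∞) → (0,∞) be nondecreasing with Φ(λ) ≥ C₁ λ^{α/2} for 0 < λ < λ₀ (for some α ∈ (0,2], C₁ > 0, λ₀ > 0) and Φ(λ)/log λ → ∞ as λ → ∞, and for each t > 0 let η_t be a Borel measure on (0,∞) with ∫_{(0,∞)} e^{-λu} η_t(du) = e^{-tΦ(λ)} for all λ > 0. Define the subordinated kernel p_t(x) = ∫_{(0,∞)} (4πu)^{-d/2} e^{-|x|²/(4u)} η_t(du). Then for every t₀ > 0 there exists C = C(t₀) > 0 such that p_t(x) ≤ C t^{-d/α} for all x ∈ ℝ^d and all t ≥ t₀. -/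
/-!
Bounding the Gaussian factor by `(4πu)^{-d/2}` reduces the claim to the negative moment
`∫ u^{-d/2} η_t(du)`. Writing `Γ(s) u^{-s} = ∫₀^∞ λ^{s-1} e^{-λu} dλ` and using Tonelli, this moment
equals `Γ(d/2)⁻¹ ∫₀^∞ λ^{d/2-1} e^{-tΦ(λ)} dλ`. Near `0` the lower bound `Φ(λ) ≥ C₁ λ^{α/2}` turns
this integral into a Gamma integral of size `t^{-d/α}`. Away from `0`, monotonicity gives
`e^{-tΦ(λ)} ≤ e^{-(t-t₀)Φ(λ₀)} e^{-t₀Φ(λ)}`: the first factor decays exponentially in `t`, and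
`Φ(λ)/log λ → ∞` makes the second one `O(λ^{-d/2-1})`.
-/

open MeasureTheory Filter Set Topology
open scoped ENNReal

theorem setLIntegral_ofReal_eq_ofReal_of_integral_eq {f : ℝ → ℝ} {s : Set ℝ}
    (hs : MeasurableSet s) (hf : ∀ x ∈ s, 0 ≤ f x) {c : ℝ} (hc : c ≠ 0)
    (h : ∫ x in s, f x = c) :
    ∫⁻ x in s, ENNReal.ofReal (f x) = ENNReal.ofReal c := by
  have hint : IntegrableOn f s := by
    by_contra h'
    exact hc (h ▸ integral_undef h')
  rw [← h, ofReal_integral_eq_lintegral_ofReal hint ((ae_restrict_iff' hs).2 (ae_of_all _ hf))]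

theorem lintegral_Ioi_rpow_mul_exp_neg_mul {s u : ℝ} (hs : 0 < s) (hu : 0 < u) :
    ∫⁻ l in Ioi (0:ℝ), ENNReal.ofReal (l ^ (s - 1) * Real.exp (-(u * l)))
      = ENNReal.ofReal (u ^ (-s) * Real.Gamma s) := by
  refine setLIntegral_ofReal_eq_ofReal_of_integral_eq measurableSet_Ioi
    (fun l hl => by have : (0:ℝ) < l := hl; positivity)
    (by have := Real.Gamma_pos_of_pos hs; positivity) ?_
  rw [Real.integral_rpow_mul_exp_neg_mul_Ioi hs hu, one_div, Real.inv_rpow hu.le,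
    Real.rpow_neg hu.le]

theorem lintegral_Ioi_rpow_mul_exp_neg_mul_rpow {p q b : ℝ} (hp : 0 < p) (hq : -1 < q)
    (hb : 0 < b) :
    ∫⁻ x in Ioi (0:ℝ), ENNReal.ofReal (x ^ q * Real.exp (-b * x ^ p))
      = ENNReal.ofReal (b ^ (-(q + 1) / p) * (1 / p) * Real.Gamma ((q + 1) / p)) := by
  have := Real.Gamma_pos_of_pos (div_pos (neg_lt_iff_pos_add.1 hq) hp)
  exact setLIntegral_ofReal_eq_ofReal_of_integral_eq measurableSet_Ioi
    (fun x hx => by have : (0:ℝ) < x := hx; positivity) (by positivity)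
    (integral_rpow_mul_exp_neg_mul_rpow hp hq hb)

theorem lintegral_Ici_rpow_neg_two {c : ℝ} (hc : 0 < c) :
    ∫⁻ x in Ici c, ENNReal.ofReal (x ^ (-2:ℝ)) = ENNReal.ofReal c⁻¹ := by
  rw [← setLIntegral_congr Ioi_ae_eq_Ici]
  refine setLIntegral_ofReal_eq_ofReal_of_integral_eq measurableSet_Ioi
    (fun x hx => by have : (0:ℝ) < x := hc.trans hx; positivity) (by positivity) ?_
  rw [integral_Ioi_rpow_of_lt (by norm_num) hc]
  norm_num [Real.rpow_neg_one]

theorem exists_exp_neg_mul_le_rpow_neg {c s : ℝ} (hc : 0 < c) (hs : 0 < s) :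
    ∃ M > 0, ∀ t > 0, Real.exp (-(c * t)) ≤ M * t ^ (-s) := by
  refine ⟨(s / c) ^ s, by positivity, fun t ht => ?_⟩
  have hpow : (c * t / s) ^ s ≤ Real.exp (c * t) := by
    calc (c * t / s) ^ s ≤ Real.exp (c * t / s) ^ s := by
          gcongr
          linarith [Real.add_one_le_exp (c * t / s)]
      _ = Real.exp (c * t) := by rw [← Real.exp_mul, div_mul_cancel₀ _ hs.ne']
  rw [Real.exp_neg, Real.rpow_neg ht.le, ← div_eq_mul_inv,
    le_div_iff₀ (by positivity), inv_mul_le_iff₀ (Real.exp_pos _)]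
  calc t ^ s = (s / c) ^ s * (c * t / s) ^ s := by
        rw [← Real.mul_rpow (by positivity) (by positivity)]
        congr 1
        field_simp
    _ ≤ Real.exp (c * t) * (s / c) ^ s := by rw [mul_comm]; gcongr

theorem measure_Ioi_zero_le_one_of_lintegral_exp_neg_le_one {ν : Measure ℝ}
    (h : ∀ l > (0:ℝ), ∫⁻ u in Ioi (0:ℝ), ENNReal.ofReal (Real.exp (-l * u)) ∂ν ≤ 1) :
    ν (Ioi 0) ≤ 1 := by
  set f : ℕ → ℝ → ℝ≥0∞ := fun n u => ENNReal.ofReal (Real.exp (-(1 / (n + 1)) * u))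
  have hf : ∀ u, Tendsto (fun n => f n u) atTop (𝓝 1) := fun u => by
    have := ENNReal.tendsto_ofReal
      (tendsto_one_div_add_atTop_nhds_zero_nat.neg.mul_const u).rexp
    simpa [f, neg_mul] using this
  calc ν (Ioi 0) = ∫⁻ u in Ioi (0:ℝ), liminf (fun n => f n u) atTop ∂ν := by
        simp_rw [fun u => (hf u).liminf_eq, setLIntegral_one]
    _ ≤ liminf (fun n => ∫⁻ u in Ioi (0:ℝ), f n u ∂ν) atTop :=
        lintegral_liminf_le fun n => by fun_prop
    _ ≤ 1 := liminf_le_of_frequently_le' (Frequently.of_forall fun n => h _ (by positivity))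

theorem ofReal_Gamma_mul_setLIntegral_rpow_neg {ν : Measure ℝ} [SFinite (ν.restrict (Ioi 0))]
    {s : ℝ} (hs : 0 < s) :
    ENNReal.ofReal (Real.Gamma s) * ∫⁻ u in Ioi (0:ℝ), ENNReal.ofReal (u ^ (-s)) ∂ν
      = ∫⁻ l in Ioi (0:ℝ), ENNReal.ofReal (l ^ (s - 1))
          * ∫⁻ u in Ioi (0:ℝ), ENNReal.ofReal (Real.exp (-l * u)) ∂ν := by
  calc ENNReal.ofReal (Real.Gamma s) * ∫⁻ u in Ioi (0:ℝ), ENNReal.ofReal (u ^ (-s)) ∂ν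
      = ∫⁻ u in Ioi (0:ℝ), (∫⁻ l in Ioi (0:ℝ),
          ENNReal.ofReal (l ^ (s - 1)) * ENNReal.ofReal (Real.exp (-l * u))) ∂ν := by
        rw [← lintegral_const_mul' _ _ ENNReal.ofReal_ne_top]
        refine setLIntegral_congr_fun measurableSet_Ioi fun (u : ℝ) (hu : 0 < u) => ?_
        rw [← ENNReal.ofReal_mul (Real.Gamma_nonneg_of_nonneg hs.le), mul_comm,
          ← lintegral_Ioi_rpow_mul_exp_neg_mul hs hu]
        refine setLIntegral_congr_fun measurableSet_Ioi fun (l : ℝ) (hl : 0 < l) => ?_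
        rw [← ENNReal.ofReal_mul (by positivity), neg_mul, mul_comm u]
    _ = ∫⁻ l in Ioi (0:ℝ), ∫⁻ u in Ioi (0:ℝ),
          ENNReal.ofReal (l ^ (s - 1)) * ENNReal.ofReal (Real.exp (-l * u)) ∂ν :=
        lintegral_lintegral_swap (by fun_prop)
    _ = _ := by simp_rw [lintegral_const_mul' _ _ ENNReal.ofReal_ne_top]

theorem setLIntegral_rpow_neg_le_of_laplace {ν : Measure ℝ} [SFinite (ν.restrict (Ioi 0))]
    {Φ : ℝ → ℝ} {s t B : ℝ} (hs : 0 < s)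
    (hlap : ∀ l > (0:ℝ), ∫⁻ u in Ioi (0:ℝ), ENNReal.ofReal (Real.exp (-l * u)) ∂ν
      = ENNReal.ofReal (Real.exp (-t * Φ l)))
    (hB : ∫⁻ l in Ioi (0:ℝ), ENNReal.ofReal (l ^ (s - 1) * Real.exp (-t * Φ l))
      ≤ ENNReal.ofReal B) :
    ∫⁻ u in Ioi (0:ℝ), ENNReal.ofReal (u ^ (-s)) ∂ν ≤ ENNReal.ofReal (B / Real.Gamma s) := by
  have hΓ := Real.Gamma_pos_of_pos hs
  rw [ENNReal.ofReal_div_of_pos hΓ, ENNReal.le_div_iff_mul_le (Or.inl (by simpa using hΓ))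
    (Or.inl ENNReal.ofReal_ne_top), mul_comm, ofReal_Gamma_mul_setLIntegral_rpow_neg hs]
  refine le_of_eq_of_le (setLIntegral_congr_fun measurableSet_Ioi fun (l : ℝ) (hl : 0 < l) => ?_)
    hB
  rw [hlap l hl, ← ENNReal.ofReal_mul (by positivity)]

theorem exists_exp_neg_mul_le_rpow_neg_of_tendsto_div_log {Φ : ℝ → ℝ} {p t₀ : ℝ}
    (hp : 0 ≤ p) (ht₀ : 0 < t₀) (hpos : ∀ l > (0:ℝ), 0 < Φ l)
    (hlim : Tendsto (fun l => Φ l / Real.log l) atTop atTop) :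
    ∃ B > 0, ∀ l > (0:ℝ), Real.exp (-(t₀ * Φ l)) ≤ B * l ^ (-p) := by
  obtain ⟨A, hA⟩ := eventually_atTop.1 (hlim.eventually_ge_atTop (p / t₀))
  set A' := max A 2
  refine ⟨A' ^ p, by positivity, fun l (hl : 0 < l) => ?_⟩
  rcases lt_or_ge l A' with hlA | hlA
  · calc Real.exp (-(t₀ * Φ l)) ≤ 1 := by
          rw [Real.exp_le_one_iff, neg_nonpos]; exact (mul_pos ht₀ (hpos l hl)).le
      _ ≤ (A' / l) ^ p := Real.one_le_rpow ((one_le_div hl).2 hlA.le) hp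
      _ = A' ^ p * l ^ (-p) := by
          rw [Real.div_rpow (by positivity) hl.le, Real.rpow_neg hl.le, div_eq_mul_inv]
  · have hlog : 0 < Real.log l := Real.log_pos (by linarith [le_max_right A 2])
    have hΦ : p * Real.log l ≤ t₀ * Φ l := by
      have := hA l (le_trans (le_max_left _ _) hlA)
      rw [div_le_div_iff₀ ht₀ hlog] at this
      linarith
    calc Real.exp (-(t₀ * Φ l)) ≤ Real.exp (-(p * Real.log l)) := by gcongr
      _ = l ^ (-p) := by rw [Real.rpow_def_of_pos hl]; ring_nf
      _ ≤ A' ^ p * l ^ (-p) :=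
          le_mul_of_one_le_left (by positivity)
            (Real.one_le_rpow (by linarith [le_max_right A 2]) hp)

theorem setLIntegral_Ioo_rpow_mul_exp_neg_le {Φ : ℝ → ℝ} {s κ C₁ lam₀ t : ℝ} (hs : 0 < s)
    (hκ : 0 < κ) (hC₁ : 0 < C₁) (ht : 0 < t)
    (hlow : ∀ l : ℝ, 0 < l → l < lam₀ → C₁ * l ^ κ ≤ Φ l) :
    ∫⁻ l in Ioo 0 lam₀, ENNReal.ofReal (l ^ (s - 1) * Real.exp (-t * Φ l))
      ≤ ENNReal.ofReal (C₁ ^ (-(s / κ)) * κ⁻¹ * Real.Gamma (s / κ) * t ^ (-(s / κ))) := by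
  calc ∫⁻ l in Ioo 0 lam₀, ENNReal.ofReal (l ^ (s - 1) * Real.exp (-t * Φ l))
      ≤ ∫⁻ l in Ioo 0 lam₀, ENNReal.ofReal (l ^ (s - 1) * Real.exp (-(t * C₁) * l ^ κ)) := by
        refine setLIntegral_mono' measurableSet_Ioo fun l ⟨hl0, hl⟩ => ?_
        refine ENNReal.ofReal_le_ofReal
          (mul_le_mul_of_nonneg_left (Real.exp_le_exp.2 ?_) (by positivity))
        nlinarith [hlow l hl0 hl]
    _ ≤ ∫⁻ l in Ioi 0, ENNReal.ofReal (l ^ (s - 1) * Real.exp (-(t * C₁) * l ^ κ)) :=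
        lintegral_mono_set Ioo_subset_Ioi_self
    _ = _ := by
        rw [lintegral_Ioi_rpow_mul_exp_neg_mul_rpow hκ (by linarith) (by positivity),
          sub_add_cancel, neg_div, Real.mul_rpow ht.le hC₁.le, one_div]
        ring_nf

theorem exists_setLIntegral_Ici_rpow_mul_exp_neg_le {Φ : ℝ → ℝ} {s σ lam₀ t₀ : ℝ}
    (hs : -1 ≤ s) (hσ : 0 < σ) (hlam₀ : 0 < lam₀) (ht₀ : 0 < t₀)
    (hmono : MonotoneOn Φ (Ioi 0)) (hpos : ∀ l > (0:ℝ), 0 < Φ l)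
    (hlim : Tendsto (fun l => Φ l / Real.log l) atTop atTop) :
    ∃ K > 0, ∀ t ≥ t₀,
      ∫⁻ l in Ici lam₀, ENNReal.ofReal (l ^ (s - 1) * Real.exp (-t * Φ l))
        ≤ ENNReal.ofReal (K * t ^ (-σ)) := by
  obtain ⟨B, hB, hdecay⟩ :=
    exists_exp_neg_mul_le_rpow_neg_of_tendsto_div_log (p := s + 1) (by linarith) ht₀ hpos hlim
  set c := Φ lam₀
  have hc : 0 < c := hpos _ hlam₀
  obtain ⟨M, hM, hexp⟩ := exists_exp_neg_mul_le_rpow_neg hc hσ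
  refine ⟨B * Real.exp (t₀ * c) * M / lam₀, by positivity, fun t ht => ?_⟩
  have ht0 : 0 < t := ht₀.trans_le ht
  have hpoint : ∀ l ∈ Ici lam₀, ENNReal.ofReal (l ^ (s - 1) * Real.exp (-t * Φ l))
      ≤ ENNReal.ofReal (B * Real.exp (-(t - t₀) * c)) * ENNReal.ofReal (l ^ (-2:ℝ)) := by
    intro l (hl : lam₀ ≤ l)
    have hl0 : 0 < l := hlam₀.trans_le hl
    have hcl : c ≤ Φ l := hmono hlam₀ hl0 hl
    rw [← ENNReal.ofReal_mul (by positivity)]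
    refine ENNReal.ofReal_le_ofReal ?_
    calc l ^ (s - 1) * Real.exp (-t * Φ l)
        = l ^ (s - 1) * (Real.exp (-(t - t₀) * Φ l) * Real.exp (-(t₀ * Φ l))) := by
          rw [← Real.exp_add]; ring_nf
      _ ≤ l ^ (s - 1) * (Real.exp (-(t - t₀) * c) * (B * l ^ (-(s + 1)))) := by
          refine mul_le_mul_of_nonneg_left (mul_le_mul (Real.exp_le_exp.2 ?_) (hdecay l hl0)
            (Real.exp_nonneg _) (by positivity)) (by positivity)
          nlinarith
      _ = B * Real.exp (-(t - t₀) * c) * l ^ (-2:ℝ) := by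
          rw [show (-2:ℝ) = (s - 1) + -(s + 1) by ring, Real.rpow_add hl0]
          ring
  calc ∫⁻ l in Ici lam₀, ENNReal.ofReal (l ^ (s - 1) * Real.exp (-t * Φ l))
      ≤ ∫⁻ l in Ici lam₀,
          ENNReal.ofReal (B * Real.exp (-(t - t₀) * c)) * ENNReal.ofReal (l ^ (-2:ℝ)) :=
        setLIntegral_mono' measurableSet_Ici hpoint
    _ = ENNReal.ofReal (B * Real.exp (-(t - t₀) * c) * lam₀⁻¹) := by
        rw [lintegral_const_mul' _ _ ENNReal.ofReal_ne_top, lintegral_Ici_rpow_neg_two hlam₀,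
          ← ENNReal.ofReal_mul (by positivity)]
    _ ≤ ENNReal.ofReal (B * Real.exp (t₀ * c) * M / lam₀ * t ^ (-σ)) := by
        refine ENNReal.ofReal_le_ofReal ?_
        have hsplit : Real.exp (-(t - t₀) * c) = Real.exp (t₀ * c) * Real.exp (-(c * t)) := by
          rw [← Real.exp_add]; ring_nf
        rw [hsplit]
        calc B * (Real.exp (t₀ * c) * Real.exp (-(c * t))) * lam₀⁻¹
            ≤ B * (Real.exp (t₀ * c) * (M * t ^ (-σ))) * lam₀⁻¹ := by gcongr; exact hexp t ht0
          _ = _ := by ring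

theorem exists_setLIntegral_Ioi_rpow_mul_exp_neg_le {Φ : ℝ → ℝ} {s κ C₁ lam₀ t₀ : ℝ}
    (hs : 0 < s) (hκ : 0 < κ) (hC₁ : 0 < C₁) (hlam₀ : 0 < lam₀) (ht₀ : 0 < t₀)
    (hmono : MonotoneOn Φ (Ioi 0)) (hpos : ∀ l > (0:ℝ), 0 < Φ l)
    (hlow : ∀ l : ℝ, 0 < l → l < lam₀ → C₁ * l ^ κ ≤ Φ l)
    (hlim : Tendsto (fun l => Φ l / Real.log l) atTop atTop) :
    ∃ K > 0, ∀ t ≥ t₀,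
      ∫⁻ l in Ioi 0, ENNReal.ofReal (l ^ (s - 1) * Real.exp (-t * Φ l))
        ≤ ENNReal.ofReal (K * t ^ (-(s / κ))) := by
  obtain ⟨K, hK, hhigh⟩ := exists_setLIntegral_Ici_rpow_mul_exp_neg_le (s := s) (σ := s / κ)
    (by linarith) (by positivity) hlam₀ ht₀ hmono hpos hlim
  refine ⟨C₁ ^ (-(s / κ)) * κ⁻¹ * Real.Gamma (s / κ) + K, by positivity, fun t ht => ?_⟩
  have ht0 : 0 < t := ht₀.trans_le ht
  rw [← Ioo_union_Ici_eq_Ioi hlam₀, lintegral_union measurableSet_Ici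
    ((Iio_disjoint_Ici le_rfl).mono_left Ioo_subset_Iio_self), add_mul,
    ENNReal.ofReal_add (by positivity) (by positivity)]
  exact add_le_add (setLIntegral_Ioo_rpow_mul_exp_neg_le hs hκ hC₁ ht0 hlow)
    (hhigh t ht)

theorem four_pi_mul_rpow_mul_exp_neg_div_le {a r u : ℝ} (hr : 0 ≤ r) (hu : 0 < u) :
    (4 * Real.pi * u) ^ a * Real.exp (-r / (4 * u)) ≤ (4 * Real.pi) ^ a * u ^ a := by
  rw [← Real.mul_rpow (by positivity) hu.le]
  refine mul_le_of_le_one_right (by positivity) (Real.exp_le_one_iff.2 ?_)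
  exact div_nonpos_of_nonpos_of_nonneg (neg_nonpos.2 hr) (by positivity)

theorem stmt2_general (d : ℕ) (hd : 1 ≤ d)
    (Φ : ℝ → ℝ) (α C₁ lam₀ : ℝ)
    (hα : 0 < α) (hC₁ : 0 < C₁) (hlam₀ : 0 < lam₀)
    (hmono : MonotoneOn Φ (Set.Ioi (0:ℝ))) (hpos : ∀ l > (0:ℝ), 0 < Φ l)
    (hlow : ∀ l : ℝ, 0 < l → l < lam₀ → C₁ * l ^ (α/2) ≤ Φ l)
    (hlim : Tendsto (fun l => Φ l / Real.log l) atTop atTop)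
    (η : ℝ → Measure ℝ)
    (hlap : ∀ t > (0:ℝ), ∀ l > (0:ℝ),
      ∫⁻ u in Set.Ioi (0:ℝ), ENNReal.ofReal (Real.exp (-l * u)) ∂(η t)
        = ENNReal.ofReal (Real.exp (-t * Φ l))) :
    ∀ t₀ > (0:ℝ), ∃ C > (0:ℝ), ∀ t ≥ t₀, ∀ x : Fin d → ℝ,
      ∫⁻ u in Set.Ioi (0:ℝ),
          ENNReal.ofReal ((4 * Real.pi * u) ^ (-(d:ℝ)/2)
            * Real.exp (-(∑ k, (x k)^2) / (4*u))) ∂(η t)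
        ≤ ENNReal.ofReal (C * t ^ (-(d:ℝ)/α)) := by
  intro t₀ ht₀
  have hs : 0 < (d:ℝ) / 2 := by positivity
  have hexp : -(d:ℝ) / α = -(((d:ℝ) / 2) / (α / 2)) := by field_simp
  obtain ⟨K, hK, hbound⟩ := exists_setLIntegral_Ioi_rpow_mul_exp_neg_le hs (by positivity)
    hC₁ hlam₀ ht₀ hmono hpos hlow hlim
  refine ⟨(4 * Real.pi) ^ (-(d:ℝ)/2) * (K / Real.Gamma ((d:ℝ) / 2)), by positivity,
    fun t ht x => ?_⟩
  have ht0 : 0 < t := ht₀.trans_le ht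
  -- Tonelli needs `η t` to be s-finite on `(0, ∞)`; letting `λ → 0` in its Laplace transform
  -- shows that its mass there is at most `1`.
  have hmass : η t (Ioi 0) ≤ 1 := measure_Ioi_zero_le_one_of_lintegral_exp_neg_le_one
    fun l hl => (hlap t ht0 l hl).trans_le <| ENNReal.ofReal_le_one.2 <|
      Real.exp_le_one_iff.2 (by nlinarith [hpos l hl])
  have : IsFiniteMeasure ((η t).restrict (Ioi 0)) :=
    isFiniteMeasure_restrict.2 (hmass.trans_lt ENNReal.one_lt_top).ne
  have hmoment := setLIntegral_rpow_neg_le_of_laplace hs (hlap t ht0) (hbound t ht)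
  rw [← hexp, ← neg_div] at hmoment
  calc _ ≤ ∫⁻ u in Ioi (0:ℝ), ENNReal.ofReal ((4 * Real.pi) ^ (-(d:ℝ)/2))
          * ENNReal.ofReal (u ^ (-(d:ℝ)/2)) ∂(η t) := by
        refine setLIntegral_mono' measurableSet_Ioi fun u (hu : 0 < u) => ?_
        rw [← ENNReal.ofReal_mul (by positivity)]
        exact ENNReal.ofReal_le_ofReal (four_pi_mul_rpow_mul_exp_neg_div_le
          (Finset.sum_nonneg fun k _ => sq_nonneg (x k)) hu)
    _ ≤ ENNReal.ofReal ((4 * Real.pi) ^ (-(d:ℝ)/2))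
          * ENNReal.ofReal (K * t ^ (-(d:ℝ)/α) / Real.Gamma ((d:ℝ) / 2)) := by
        rw [lintegral_const_mul' _ _ ENNReal.ofReal_ne_top]
        gcongr
    _ = _ := by
        rw [← ENNReal.ofReal_mul (by positivity)]
        ring_nf

/-- For Φ as in the assumptions and a family of measures `η_t` on (0,∞)
with Laplace transform `e^{-tΦ(λ)}`, the subordinated kernel
`p_t(x) = ∫ (4πu)^{-d/2} e^{-|x|²/(4u)} η_t(du)` satisfies `p_t(x) ≤ C t^{-d/α}`
for all `x ∈ ℝ^d` and `t ≥ t₀`. -/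
theorem stmt2 (d : ℕ) (hd : 1 ≤ d)
    (Φ : ℝ → ℝ) (α C₁ lam₀ : ℝ)
    (hα : 0 < α) (hα2 : α ≤ 2) (hC₁ : 0 < C₁) (hlam₀ : 0 < lam₀)
    (hmono : MonotoneOn Φ (Set.Ioi (0:ℝ))) (hpos : ∀ l > (0:ℝ), 0 < Φ l)
    (hlow : ∀ l : ℝ, 0 < l → l < lam₀ → C₁ * l ^ (α/2) ≤ Φ l)
    (hlim : Tendsto (fun l => Φ l / Real.log l) atTop atTop)
    (η : ℝ → Measure ℝ)
    (hlap : ∀ t > (0:ℝ), ∀ l > (0:ℝ),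
      ∫⁻ u in Set.Ioi (0:ℝ), ENNReal.ofReal (Real.exp (-l * u)) ∂(η t)
        = ENNReal.ofReal (Real.exp (-t * Φ l))) :
    ∀ t₀ > (0:ℝ), ∃ C > (0:ℝ), ∀ t ≥ t₀, ∀ x : Fin d → ℝ,
      ∫⁻ u in Set.Ioi (0:ℝ),
          ENNReal.ofReal ((4 * Real.pi * u) ^ (-(d:ℝ)/2)
            * Real.exp (-(∑ k, (x k)^2) / (4*u))) ∂(η t)
        ≤ ENNReal.ofReal (C * t ^ (-(d:ℝ)/α)) :=
  stmt2_general d hd Φ α C₁ lam₀ hα hC₁ hlam₀ hmono hpos hlow hlim η hlap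
end

section
/- Let α, d > 0, let x₀ > 0, and let g : (0,∞) → (0,∞) be nondecreasing and continuous on [x₀,∞). Let j(x) = x^{d+α} g(x^α), which is strictly increasing and continuous on [x₀,∞) with j(x) → ∞; for t ≥ t₀ := j(x₀) let x_t = j^{-1}(t) and h(t) = g(x_t^α). Then the following are equivalent: (i) the limit a := lim_{x→∞} (log g(x)) / (log x) exists in [0,∞]; (ii) the limit b := lim_{t→∞} (log x_t) / (log t) exists in [0, 1/(d+α)]; (iii) the limit c := lim_{t→∞} (log h(t)) / (log t) exists in [0,1]. Moreover, when they exist, b = 1/(d + (a+1)α) and c = 1 - (d+α)b = 1 - (d+α)/(d + (a+1)α), with the conventions 1/∞ = 0 and 1/0⁺ = ∞. -/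
/-!
Taking logarithms in `t = x_t^(d+α) g(x_t^α)` gives `log t = (d+α) log x_t + log g(y)` with
`y = x_t^α`, so `log x_t / log t = (d + α + α u)⁻¹` and
`log h(t) / log t = 1 - (d+α) log x_t / log t`, where `u = log g(y) / log y`. As `t → ∞`,
`y = x_t^α` runs through all large reals (it has the right inverse `y ↦ j(y^(1/α))`), so `u`
has a limit along `t` iff `log g(y) / log y` has one along `y`. Finally `a ↦ (d + α + α a)⁻¹`
is a homeomorphism `[0, ∞] ≃ [0, 1/(d+α)]` (with `∞ ↦ 0`), and it transports limits in both
directions.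
-/

open Filter Set Topology Real

theorem Filter.map_eq_of_eventually_rightInverse {α β : Type*} {φ : β → α} {ψ : α → β}
    {la : Filter α} {lb : Filter β} (hφ : Tendsto φ lb la) (hψ : Tendsto ψ la lb)
    (hφψ : ∀ᶠ y in la, φ (ψ y) = y) : map φ lb = la :=
  le_antisymm hφ <| calc
    la = map (φ ∘ ψ) la := ((map_congr hφψ).trans map_id).symm
    _ = map φ (map ψ la) := map_map.symm
    _ ≤ map φ lb := map_mono hψ

theorem Real.map_rpow_atTop {α : ℝ} (hα : 0 < α) : map (fun x : ℝ => x ^ α) atTop = atTop :=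
  map_eq_of_eventually_rightInverse (tendsto_rpow_atTop hα) (tendsto_rpow_atTop (inv_pos.2 hα))
    (by filter_upwards [eventually_ge_atTop 0] with y hy using rpow_inv_rpow hy hα.ne')

section RightInverse

variable {j xt : ℝ → ℝ} {x₀ : ℝ}

theorem StrictMonoOn.rightInverse_apply_self (hj : StrictMonoOn j (Ici x₀))
    (hxt : ∀ t ≥ j x₀, x₀ ≤ xt t ∧ j (xt t) = t) {x : ℝ} (hx : x₀ ≤ x) : xt (j x) = x :=
  have hjx := hxt (j x) (hj.monotoneOn self_mem_Ici hx hx)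
  hj.injOn hjx.1 hx hjx.2

theorem StrictMonoOn.tendsto_atTop_of_rightInverse (hj : StrictMonoOn j (Ici x₀))
    (hxt : ∀ t ≥ j x₀, x₀ ≤ xt t ∧ j (xt t) = t) : Tendsto j atTop atTop := by
  refine tendsto_atTop.2 fun M => ?_
  obtain ⟨hx₀, hj_eq⟩ := hxt (max M (j x₀)) (le_max_right _ _)
  filter_upwards [eventually_ge_atTop (xt (max M (j x₀)))] with y hy
  calc M ≤ j (xt (max M (j x₀))) := hj_eq.symm ▸ le_max_left _ _
    _ ≤ j y := hj.monotoneOn hx₀ (hx₀.trans hy) hy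

theorem StrictMonoOn.tendsto_rightInverse_atTop (hj : StrictMonoOn j (Ici x₀))
    (hxt : ∀ t ≥ j x₀, x₀ ≤ xt t ∧ j (xt t) = t) : Tendsto xt atTop atTop := by
  refine tendsto_atTop.2 fun M => ?_
  have hM : max M x₀ ∈ Ici x₀ := le_max_right M x₀
  filter_upwards [eventually_ge_atTop (j (max M x₀))] with t ht
  obtain ⟨hx₀, hj_eq⟩ := hxt t ((hj.monotoneOn self_mem_Ici hM hM).trans ht)
  exact le_of_max_le_left ((hj.le_iff_le hM hx₀).1 (by rwa [hj_eq]))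

theorem StrictMonoOn.map_rightInverse_atTop (hj : StrictMonoOn j (Ici x₀))
    (hxt : ∀ t ≥ j x₀, x₀ ≤ xt t ∧ j (xt t) = t) : map xt atTop = atTop :=
  map_eq_of_eventually_rightInverse (hj.tendsto_rightInverse_atTop hxt)
    (hj.tendsto_atTop_of_rightInverse hxt)
    (by filter_upwards [eventually_ge_atTop x₀] with x hx
        using hj.rightInverse_apply_self hxt hx)

end RightInverse

section GrowthExponent

variable {ι : Type*} {L : Filter ι} {d α : ℝ} {u B C : ι → ℝ}

noncomputable def growthExponent (d α : ℝ) (a : EReal) : ℝ :=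
  if a = ⊤ then 0 else 1 / (d + (a.toReal + 1) * α)

theorem growthExponent_coe (A : ℝ) : growthExponent d α A = (d + α + α * A)⁻¹ := by
  rw [growthExponent, if_neg (EReal.coe_ne_top A), EReal.toReal_coe, one_div]
  ring_nf

theorem growthExponent_mem_Icc (hα : 0 ≤ α) (hdα : 0 < d + α) {a : EReal} (ha : 0 ≤ a) :
    growthExponent d α a ∈ Icc 0 (1 / (d + α)) := by
  induction a using EReal.rec with
  | bot => simp at ha
  | top => simp [growthExponent, hdα.le]
  | coe A =>
    have hA : 0 ≤ α * A := mul_nonneg hα (EReal.coe_nonneg.1 ha)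
    rw [growthExponent_coe, one_div]
    exact ⟨by positivity, inv_anti₀ hdα (le_add_of_nonneg_right hA)⟩

theorem tendsto_growthExponent (hα : 0 < α) (hdα : 0 < d + α) {a : EReal} (ha : 0 ≤ a)
    (hB : B =ᶠ[L] fun i => (d + α + α * u i)⁻¹)
    (hu : Tendsto (fun i => (u i : EReal)) L (𝓝 a)) :
    Tendsto B L (𝓝 (growthExponent d α a)) := by
  refine Tendsto.congr' hB.symm ?_
  induction a using EReal.rec with
  | bot => simp at ha
  | top =>
    exact (tendsto_atTop_add_const_left _ _
      ((EReal.tendsto_coe_nhds_top_iff.1 hu).const_mul_atTop hα)).inv_tendsto_atTop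
  | coe A =>
    have hpos : 0 < d + α + α * A := by
      have := mul_nonneg hα.le (EReal.coe_nonneg.1 ha); linarith
    rw [growthExponent_coe]
    exact (tendsto_const_nhds.add ((EReal.tendsto_coe.1 hu).const_mul α)).inv₀ hpos.ne'

theorem exists_tendsto_of_tendsto_inv [L.NeBot] (hα : 0 < α) (hBpos : ∀ᶠ i in L, 0 < B i)
    (hB : B =ᶠ[L] fun i => (d + α + α * u i)⁻¹) {b : ℝ} (hb : b ≤ 1 / (d + α))
    (hlim : Tendsto B L (𝓝 b)) :
    ∃ a : EReal, 0 ≤ a ∧ Tendsto (fun i => (u i : EReal)) L (𝓝 a) := by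
  have hu : u =ᶠ[L] fun i => ((B i)⁻¹ - (d + α)) / α := by
    filter_upwards [hB] with i hi
    rw [hi, inv_inv]
    field_simp
    ring
  rcases (ge_of_tendsto hlim (hBpos.mono fun _ => le_of_lt)).eq_or_lt with rfl | hb0
  · refine ⟨⊤, le_top, EReal.tendsto_coe_nhds_top_iff.2 (Tendsto.congr' hu.symm ?_)⟩
    have hinv := (tendsto_nhdsWithin_iff.2 ⟨hlim, hBpos⟩).inv_tendsto_nhdsGT_zero
    simpa only [sub_eq_add_neg, Pi.inv_apply] using
      (tendsto_atTop_add_const_right _ (-(d + α)) hinv).atTop_div_const hα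
  · have hdα : 0 < d + α := one_div_pos.1 (hb0.trans_le hb)
    have hA : d + α ≤ b⁻¹ := (le_inv_comm₀ hdα hb0).2 (by rwa [one_div] at hb)
    refine ⟨((b⁻¹ - (d + α)) / α : ℝ), ?_, EReal.tendsto_coe.2 ?_⟩
    · exact EReal.coe_nonneg.2 (div_nonneg (sub_nonneg.2 hA) hα.le)
    · exact (((hlim.inv₀ hb0.ne').sub_const _).div_const _).congr' hu.symm

theorem exists_tendsto_one_sub_mul_iff {k : ℝ} (hk : 0 < k)
    (hC : C =ᶠ[L] fun i => 1 - k * B i) :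
    (∃ b, 0 ≤ b ∧ b ≤ 1 / k ∧ Tendsto B L (𝓝 b)) ↔
      ∃ c, 0 ≤ c ∧ c ≤ 1 ∧ Tendsto C L (𝓝 c) := by
  constructor
  · rintro ⟨b, hb0, hb1, hlim⟩
    rw [le_div_iff₀ hk] at hb1
    exact ⟨1 - k * b, by linarith, by nlinarith,
      (tendsto_const_nhds.sub (hlim.const_mul k)).congr' hC.symm⟩
  · rintro ⟨c, hc0, hc1, hlim⟩
    have hB : B =ᶠ[L] fun i => (1 - C i) / k := by
      filter_upwards [hC] with i hi
      rw [hi]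
      field_simp
      ring
    exact ⟨(1 - c) / k, div_nonneg (by linarith) hk.le,
      div_le_div_of_nonneg_right (by linarith) hk.le,
      ((tendsto_const_nhds.sub hlim).div_const k).congr' hB.symm⟩

theorem exponent_limits_of_eventuallyEq [L.NeBot] (hα : 0 < α) (hdα : 0 < d + α)
    (hBpos : ∀ᶠ i in L, 0 < B i) (hB : B =ᶠ[L] fun i => (d + α + α * u i)⁻¹)
    (hC : C =ᶠ[L] fun i => 1 - (d + α) * B i) :
    ((∃ a : EReal, 0 ≤ a ∧ Tendsto (fun i => (u i : EReal)) L (𝓝 a)) ↔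
        ∃ b, 0 ≤ b ∧ b ≤ 1 / (d + α) ∧ Tendsto B L (𝓝 b)) ∧
    ((∃ a : EReal, 0 ≤ a ∧ Tendsto (fun i => (u i : EReal)) L (𝓝 a)) ↔
        ∃ c, 0 ≤ c ∧ c ≤ 1 ∧ Tendsto C L (𝓝 c)) ∧
    ∀ a : EReal, 0 ≤ a → Tendsto (fun i => (u i : EReal)) L (𝓝 a) →
      Tendsto B L (𝓝 (growthExponent d α a)) ∧
        Tendsto C L (𝓝 (1 - (d + α) * growthExponent d α a)) := by
  have hiff : (∃ a : EReal, 0 ≤ a ∧ Tendsto (fun i => (u i : EReal)) L (𝓝 a)) ↔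
      ∃ b, 0 ≤ b ∧ b ≤ 1 / (d + α) ∧ Tendsto B L (𝓝 b) :=
    ⟨fun ⟨a, ha, hu⟩ => ⟨_, (growthExponent_mem_Icc hα.le hdα ha).1,
        (growthExponent_mem_Icc hα.le hdα ha).2, tendsto_growthExponent hα hdα ha hB hu⟩,
      fun ⟨_, _, hb, hlim⟩ => exists_tendsto_of_tendsto_inv hα hBpos hB hb hlim⟩
  refine ⟨hiff, hiff.trans (exists_tendsto_one_sub_mul_iff hdα hC), fun a ha hu => ?_⟩
  have hlim := tendsto_growthExponent hα hdα ha hB hu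
  exact ⟨hlim, (tendsto_const_nhds.sub (hlim.const_mul _)).congr' hC.symm⟩

end GrowthExponent

section RpowMulCompRpow

variable {d α x t : ℝ} {g : ℝ → ℝ}

theorem strictMonoOn_rpow_mul_comp_rpow (hα : 0 ≤ α) (hdα : 0 < d + α)
    (hgpos : ∀ x > 0, 0 < g x) (hgmono : MonotoneOn g (Ioi 0)) :
    StrictMonoOn (fun x => x ^ (d + α) * g (x ^ α)) (Ioi 0) := fun _ hx _ hy hxy =>
  mul_lt_mul (rpow_lt_rpow (le_of_lt hx) hxy hdα)
    (hgmono (rpow_pos_of_pos hx α) (rpow_pos_of_pos hy α) (rpow_le_rpow (le_of_lt hx) hxy.le hα))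
    (hgpos _ (rpow_pos_of_pos hx α)) (rpow_nonneg (le_of_lt hy) _)

theorem log_eq_of_rpow_mul_comp_rpow_eq (hx : 0 < x) (hg : 0 < g (x ^ α))
    (ht : x ^ (d + α) * g (x ^ α) = t) : log t = (d + α) * log x + log (g (x ^ α)) := by
  rw [← ht, log_mul (rpow_pos_of_pos hx _).ne' hg.ne', log_rpow hx]

theorem log_div_log_eq_inv (hα : α ≠ 0) (hx : 1 < x) (hg : 0 < g (x ^ α))
    (ht : x ^ (d + α) * g (x ^ α) = t) :
    log x / log t = (d + α + α * (log (g (x ^ α)) / log (x ^ α)))⁻¹ := by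
  have hlogx : log x ≠ 0 := (log_pos hx).ne'
  rw [log_eq_of_rpow_mul_comp_rpow_eq (zero_lt_one.trans hx) hg ht,
    log_rpow (zero_lt_one.trans hx)]
  field_simp

theorem log_comp_div_log_eq (hx : 0 < x) (hg : 0 < g (x ^ α)) (ht₁ : 1 < t)
    (ht : x ^ (d + α) * g (x ^ α) = t) :
    log (g (x ^ α)) / log t = 1 - (d + α) * (log x / log t) := by
  have hlogt : log t ≠ 0 := (log_pos ht₁).ne'
  rw [log_eq_of_rpow_mul_comp_rpow_eq hx hg ht] at hlogt ⊢
  field_simp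
  ring

end RpowMulCompRpow

theorem stmt14_general (α d x₀ : ℝ) (hα : 0 < α) (hd : 0 < d) (hx₀ : 0 < x₀)
    (g : ℝ → ℝ) (hgpos : ∀ x > (0:ℝ), 0 < g x) (hgmono : MonotoneOn g (Set.Ioi (0:ℝ)))
    (xt h : ℝ → ℝ)
    (hxt : ∀ t ≥ x₀ ^ (d+α) * g (x₀ ^ α),
      x₀ ≤ xt t ∧ (xt t) ^ (d+α) * g ((xt t) ^ α) = t)
    (hh : ∀ t, h t = g ((xt t) ^ α)) :
    ((∃ a : EReal, 0 ≤ a ∧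
        Tendsto (fun x : ℝ => ((Real.log (g x) / Real.log x : ℝ) : EReal)) atTop (nhds a))
      ↔ (∃ b : ℝ, 0 ≤ b ∧ b ≤ 1/(d+α) ∧
          Tendsto (fun t : ℝ => Real.log (xt t) / Real.log t) atTop (nhds b)))
    ∧ ((∃ a : EReal, 0 ≤ a ∧
        Tendsto (fun x : ℝ => ((Real.log (g x) / Real.log x : ℝ) : EReal)) atTop (nhds a))
      ↔ (∃ c : ℝ, 0 ≤ c ∧ c ≤ 1 ∧
          Tendsto (fun t : ℝ => Real.log (h t) / Real.log t) atTop (nhds c)))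
    ∧ (∀ a : EReal, 0 ≤ a →
        Tendsto (fun x : ℝ => ((Real.log (g x) / Real.log x : ℝ) : EReal)) atTop (nhds a) →
        Tendsto (fun t : ℝ => Real.log (xt t) / Real.log t) atTop
          (nhds (if a = ⊤ then (0:ℝ) else 1 / (d + (a.toReal + 1) * α)))
        ∧ Tendsto (fun t : ℝ => Real.log (h t) / Real.log t) atTop
          (nhds (1 - (d+α) * (if a = ⊤ then (0:ℝ) else 1 / (d + (a.toReal + 1) * α))))) := by
  have hdα : 0 < d + α := by linarith
  have hj : StrictMonoOn (fun x => x ^ (d + α) * g (x ^ α)) (Ici x₀) :=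
    (strictMonoOn_rpow_mul_comp_rpow hα.le hdα hgpos hgmono).mono (Ici_subset_Ioi.2 hx₀)
  have hxt_top : Tendsto xt atTop atTop := hj.tendsto_rightInverse_atTop hxt
  have hmap : map (fun t => xt t ^ α) atTop = atTop := calc
    map (fun t => xt t ^ α) atTop = map (· ^ α) (map xt atTop) := by rw [map_map]; rfl
    _ = atTop := by rw [hj.map_rightInverse_atTop hxt, map_rpow_atTop hα]
  have hG (l : Filter EReal) :
      Tendsto (fun x : ℝ => ((log (g x) / log x : ℝ) : EReal)) atTop l ↔
        Tendsto (fun t => ((log (g (xt t ^ α)) / log (xt t ^ α) : ℝ) : EReal)) atTop l := by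
    conv_lhs => rw [← hmap]
    exact tendsto_map'_iff
  have hlarge : ∀ᶠ t in atTop, 1 < xt t ∧ 1 < t ∧ xt t ^ (d + α) * g (xt t ^ α) = t := by
    filter_upwards [hxt_top.eventually_gt_atTop 1, eventually_gt_atTop 1,
      eventually_ge_atTop (x₀ ^ (d + α) * g (x₀ ^ α))] with t hxt₁ ht₁ ht
    exact ⟨hxt₁, ht₁, (hxt t ht).2⟩
  have hg (t : ℝ) (hxt₁ : 1 < xt t) : 0 < g (xt t ^ α) := hgpos _ (by positivity)
  simp only [hG]
  refine exponent_limits_of_eventuallyEq hα hdα ?_ ?_ ?_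
  · exact hlarge.mono fun t ⟨hxt₁, ht₁, _⟩ => div_pos (log_pos hxt₁) (log_pos ht₁)
  · exact hlarge.mono fun t ⟨hxt₁, _, ht⟩ =>
      log_div_log_eq_inv hα.ne' hxt₁ (hg t hxt₁) ht
  · refine hlarge.mono fun t ⟨hxt₁, ht₁, ht⟩ => ?_
    simp only [hh]
    exact log_comp_div_log_eq (by positivity) (hg t hxt₁) ht₁ ht

/-- With `j(x) = x^{d+α} g(x^α)`, `x_t = j⁻¹(t)` and `h(t) = g(x_t^α)`,
the following are equivalent: (i) `lim log g(x)/log x = a ∈ [0,∞]` exists;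
(ii) `lim log x_t/log t = b ∈ [0,1/(d+α)]` exists; (iii) `lim log h(t)/log t = c ∈ [0,1]`
exists; and then `b = 1/(d+(a+1)α)`, `c = 1-(d+α)b` (with `1/∞ = 0`). -/
theorem stmt14 (α d x₀ : ℝ) (hα : 0 < α) (hd : 0 < d) (hx₀ : 0 < x₀)
    (g : ℝ → ℝ) (hgpos : ∀ x > (0:ℝ), 0 < g x) (hgmono : MonotoneOn g (Set.Ioi (0:ℝ)))
    (hgcont : ContinuousOn g (Set.Ici x₀))
    (xt h : ℝ → ℝ)
    (hxt : ∀ t ≥ x₀ ^ (d+α) * g (x₀ ^ α),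
      x₀ ≤ xt t ∧ (xt t) ^ (d+α) * g ((xt t) ^ α) = t)
    (hh : ∀ t, h t = g ((xt t) ^ α)) :
    ((∃ a : EReal, 0 ≤ a ∧
        Tendsto (fun x : ℝ => ((Real.log (g x) / Real.log x : ℝ) : EReal)) atTop (nhds a))
      ↔ (∃ b : ℝ, 0 ≤ b ∧ b ≤ 1/(d+α) ∧
          Tendsto (fun t : ℝ => Real.log (xt t) / Real.log t) atTop (nhds b)))
    ∧ ((∃ a : EReal, 0 ≤ a ∧
        Tendsto (fun x : ℝ => ((Real.log (g x) / Real.log x : ℝ) : EReal)) atTop (nhds a))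
      ↔ (∃ c : ℝ, 0 ≤ c ∧ c ≤ 1 ∧
          Tendsto (fun t : ℝ => Real.log (h t) / Real.log t) atTop (nhds c)))
    ∧ (∀ a : EReal, 0 ≤ a →
        Tendsto (fun x : ℝ => ((Real.log (g x) / Real.log x : ℝ) : EReal)) atTop (nhds a) →
        Tendsto (fun t : ℝ => Real.log (xt t) / Real.log t) atTop
          (nhds (if a = ⊤ then (0:ℝ) else 1 / (d + (a.toReal + 1) * α)))
        ∧ Tendsto (fun t : ℝ => Real.log (h t) / Real.log t) atTop
          (nhds (1 - (d+α) * (if a = ⊤ then (0:ℝ) else 1 / (d + (a.toReal + 1) * α))))) :=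
  stmt14_general α d x₀ hα hd hx₀ g hgpos hgmono xt h hxt hh
end
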